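/- For the VLMOP2 problem with objectives f_1(θ) = 1 − exp(−∑_{i=1}^n (θ_i − 1/√n)²) and f_2(θ) = 1 − exp(−∑_{i=1}^n (θ_i + 1/√n)²), every point θ of the form θ_i = t/√n for a common t ∈ [−1, 1] is Pareto optimal. -/

import Mathlib

theorem stmt13 {n : ℕ} (hn : 1 ≤ n) (t : ℝ) (ht : t ∈ Set.Icc (-1 : ℝ) 1)
    (θ : Fin n → ℝ) (hθ : ∀ i, θ i = t / Real.sqrt n) :
    ¬ ∃ θ' : Fin n → ℝ,
      ((1 - Real.exp (-(∑ i, (θ' i - 1 / Real.sqrt n) ^ 2)) ≤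
          1 - Real.exp (-(∑ i, (θ i - 1 / Real.sqrt n) ^ 2))) ∧
       (1 - Real.exp (-(∑ i, (θ' i + 1 / Real.sqrt n) ^ 2)) ≤
          1 - Real.exp (-(∑ i, (θ i + 1 / Real.sqrt n) ^ 2)))) ∧
      ((1 - Real.exp (-(∑ i, (θ' i - 1 / Real.sqrt n) ^ 2)) <
          1 - Real.exp (-(∑ i, (θ i - 1 / Real.sqrt n) ^ 2))) ∨
       (1 - Real.exp (-(∑ i, (θ' i + 1 / Real.sqrt n) ^ 2)) <
          1 - Real.exp (-(∑ i, (θ i + 1 / Real.sqrt n) ^ 2)))) := by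
  rintro ⟨θ', ⟨h1, h2⟩, hst⟩
  obtain ⟨ht1, ht2⟩ := ht
  have hn0 : (0:ℝ) < n := by exact_mod_cast hn
  have hr2 : Real.sqrt n ^ 2 = n := Real.sq_sqrt hn0.le
  have hA : ∑ i, (θ i - 1 / Real.sqrt n) ^ 2 = (t - 1) ^ 2 := by
    have h : ∀ i ∈ Finset.univ, (θ i - 1 / Real.sqrt n) ^ 2 = (t - 1) ^ 2 / n := by
      intro i _
      rw [hθ i, div_sub_div_same, div_pow, hr2]
    rw [Finset.sum_congr rfl h, Finset.sum_const, Finset.card_univ,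
      Fintype.card_fin, nsmul_eq_mul]
    field_simp
  have hB : ∑ i, (θ i + 1 / Real.sqrt n) ^ 2 = (t + 1) ^ 2 := by
    have h : ∀ i ∈ Finset.univ, (θ i + 1 / Real.sqrt n) ^ 2 = (t + 1) ^ 2 / n := by
      intro i _
      rw [hθ i, ← add_div, div_pow, hr2]
    rw [Finset.sum_congr rfl h, Finset.sum_const, Finset.card_univ,
      Fintype.card_fin, nsmul_eq_mul]
    field_simp
  set a := ∑ i, (θ' i - 1 / Real.sqrt n) ^ 2 with ha_def
  set b := ∑ i, (θ' i + 1 / Real.sqrt n) ^ 2 with hb_def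
  have ha0 : 0 ≤ a := Finset.sum_nonneg fun i _ => sq_nonneg _
  have hb0 : 0 ≤ b := Finset.sum_nonneg fun i _ => sq_nonneg _
  rw [hA] at h1 hst
  rw [hB] at h2 hst
  have ha : a ≤ (t - 1) ^ 2 := by
    rw [sub_le_sub_iff_left, Real.exp_le_exp, neg_le_neg_iff] at h1
    exact h1
  have hb : b ≤ (t + 1) ^ 2 := by
    rw [sub_le_sub_iff_left, Real.exp_le_exp, neg_le_neg_iff] at h2
    exact h2
  have hst' : a < (t - 1) ^ 2 ∨ b < (t + 1) ^ 2 := by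
    rcases hst with h | h
    · left
      rwa [sub_lt_sub_iff_left, Real.exp_lt_exp, neg_lt_neg_iff] at h
    · right
      rwa [sub_lt_sub_iff_left, Real.exp_lt_exp, neg_lt_neg_iff] at h
  set S := ∑ i, (θ' i) ^ 2 with hS_def
  have hsum : a + b = 2 * S + 2 := by
    rw [ha_def, hb_def, hS_def, ← Finset.sum_add_distrib, Finset.mul_sum]
    have h : ∀ i ∈ Finset.univ, (θ' i - 1 / Real.sqrt n) ^ 2 + (θ' i + 1 / Real.sqrt n) ^ 2
        = 2 * θ' i ^ 2 + 2 / n := by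
      intro i _
      have h0 : (1 / Real.sqrt n) ^ 2 = 1 / (n:ℝ) := by rw [div_pow, one_pow, hr2]
      linear_combination 2 * h0
    rw [Finset.sum_congr rfl h, Finset.sum_add_distrib, Finset.sum_const, Finset.card_univ,
      Fintype.card_fin, nsmul_eq_mul]
    field_simp
  have hCS : (1 - S) ^ 2 ≤ a * b := by
    have key := Finset.sum_mul_sq_le_sq_mul_sq Finset.univ
      (fun i => 1 / Real.sqrt n - θ' i) (fun i => 1 / Real.sqrt n + θ' i)
    have e1 : ∑ i, (1 / Real.sqrt n - θ' i) ^ 2 = a := by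
      rw [ha_def]
      exact Finset.sum_congr rfl fun i _ => by ring
    have e2 : ∑ i, (1 / Real.sqrt n + θ' i) ^ 2 = b := by
      rw [hb_def]
      exact Finset.sum_congr rfl fun i _ => by ring
    have e3 : ∑ i, (1 / Real.sqrt n - θ' i) * (1 / Real.sqrt n + θ' i) = 1 - S := by
      have h : ∀ i ∈ Finset.univ, (1 / Real.sqrt n - θ' i) * (1 / Real.sqrt n + θ' i)
          = 1 / n - θ' i ^ 2 := by
        intro i _
        have h0 : (1 / Real.sqrt n) ^ 2 = 1 / (n:ℝ) := by rw [div_pow, one_pow, hr2]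
        linear_combination h0
      rw [Finset.sum_congr rfl h, Finset.sum_sub_distrib, Finset.sum_const, Finset.card_univ,
        Fintype.card_fin, nsmul_eq_mul, hS_def]
      field_simp
    rw [e1, e2, e3] at key
    exact key
  clear_value a b S
  clear ha_def hb_def hS_def hA hB h1 h2 hst hθ
  have hS : S < t ^ 2 := by
    rcases hst' with h | h
    · nlinarith [hsum, h, hb]
    · nlinarith [hsum, h, ha]
  have h1t : 0 ≤ 1 - t ^ 2 := by nlinarith
  have hup : a * b ≤ (1 - t ^ 2) ^ 2 := by
    nlinarith [mul_le_mul ha hb hb0 (sq_nonneg (t - 1))]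
  have hlow : (1 - t ^ 2) ^ 2 < (1 - S) ^ 2 := by nlinarith
  linarith [hCS, hup, hlow]
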